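/- arXiv:2502.12615 — 3 statements merged into one kernel-verified Lean document; each statement's English description precedes it below -/
import Mathlib

section
/- For all integers k ≥ 1 and p, j ≥ 0, F_k^j(A_{k,p}) = A_{k, p ⊖ j} and L_k^j(A_{k,p}) = A_{k, p+j}, where ⊖ denotes truncated subtraction on ℕ (a ⊖ b = max(0, a − b)) and F_k^j, L_k^j denote j-fold iterates. In particular A_{k,p} = L_k^p(1). -/
/-!
Hofstadter's function is self-similar along the numbers `A p`: for `p ≥ 1` and
`A p + m ≤ A (p + 1)` one has `F (A p + m) = A (p - 1) + F m`. This goes by strong induction on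
the argument: after unfolding `F n = n - F^[k] (n - 1)`, the induction hypothesis applied `k`
times lowers `A p` to `A (p - k)` (monotonicity of `F` keeps the remainders in range), and
`A p = A (p - 1) + A (p - k)` closes the step. For `m = 0` this is `F (A p) = A (p - 1)`, whence
`L (A p) = A p + A (p - (k - 1)) = A (p + 1)`.
-/

/-- Fuel-limited version of Hofstadter's recursion:
`Fa k fuel n` equals `F_k n` whenever `fuel ≥ n`. -/
def Fa (k : ℕ) : ℕ → ℕ → ℕ
  | 0, _ => 0
  | _ + 1, 0 => 0
  | fuel + 1, n + 1 => (n + 1) - (Fa k fuel)^[k] n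

/-- Hofstadter's function `F_k` : `F k 0 = 0` and `F k n = n - (F k)^[k] (n-1)`
for `n ≥ 1` (since `F_k m ≤ m`, the fuel `n` is always sufficient). -/
def F (k : ℕ) (n : ℕ) : ℕ := Fa k n n

/-- The function `L_k n = n + (F k)^[k-1] n`. -/
def L (k : ℕ) (n : ℕ) : ℕ := n + (F k)^[k - 1] n

/-- The Fibonacci-like sequence `A_{k,p}` : `A k p = p+1` for `p < k`,
and `A k p = A k (p-1) + A k (p-k)` for `p ≥ k`.
(The `max k 1` only makes termination evident; in all statements `k ≥ 1`.) -/
def A (k : ℕ) : ℕ → ℕ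
  | 0 => 1
  | p + 1 => if p + 1 < k then p + 2 else A k p + A k (p + 1 - max k 1)
termination_by p => p
decreasing_by all_goals omega

theorem Set.EqOn.iterate {α : Type*} {f g : α → α} {s : Set α} (hfg : Set.EqOn f g s)
    (hf : Set.MapsTo f s s) (i : ℕ) : Set.EqOn f^[i] g^[i] s := by
  induction i with
  | zero => exact fun _ _ => rfl
  | succ i ih =>
    intro x hx
    rw [Function.iterate_succ_apply, Function.iterate_succ_apply, ← hfg hx]
    exact ih (hf hx)

namespace Hofstadter

variable {k : ℕ}

theorem A_zero : A k 0 = 1 := by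
  rw [A]

theorem A_of_lt {p : ℕ} (hp : p < k) : A k p = p + 1 := by
  cases p with
  | zero => exact A_zero
  | succ p => rw [A, if_pos hp]

theorem A_pos (p : ℕ) : 0 < A k p := by
  induction p with
  | zero => rw [A_zero]; exact one_pos
  | succ p ih => rw [A]; split_ifs <;> omega

theorem A_succ (hk : 1 ≤ k) (p : ℕ) : A k (p + 1) = A k p + A k (p - (k - 1)) := by
  rw [A]
  split_ifs with hp
  · rw [A_of_lt (by omega), Nat.sub_eq_zero_of_le (by omega), A_zero]
  · rw [max_eq_left hk, show p + 1 - k = p - (k - 1) by omega]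

theorem A_pred_add_A_sub (hk : 1 ≤ k) {p : ℕ} (hp : 1 ≤ p) :
    A k (p - 1) + A k (p - k) = A k p := by
  obtain ⟨q, rfl⟩ := Nat.exists_eq_add_of_le' hp
  rw [A_succ hk, Nat.add_sub_cancel, show q + 1 - k = q - (k - 1) by omega]

theorem A_strictMono (hk : 1 ≤ k) : StrictMono (A k) :=
  strictMono_nat_of_lt_succ fun p => by
    rw [A_succ hk]
    exact Nat.lt_add_of_pos_right (A_pos _)

theorem Fa_le (fuel n : ℕ) : Fa k fuel n ≤ n := by
  cases fuel <;> cases n <;> rw [Fa] <;> omega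

theorem Fa_mapsTo_Iic (fuel n : ℕ) : Set.MapsTo (Fa k fuel) (Set.Iic n) (Set.Iic n) :=
  fun x hx => (Fa_le fuel x).trans hx

theorem Fa_eq_F {fuel n : ℕ} (hn : n ≤ fuel) : Fa k fuel n = F k n := by
  induction n using Nat.strong_induction_on generalizing fuel with
  | _ n ih =>
    obtain _ | n := n
    · cases fuel <;> rfl
    obtain ⟨fuel, rfl⟩ := Nat.exists_eq_add_of_le' (Nat.one_le_of_lt hn)
    have hfuel : Set.EqOn (Fa k fuel) (F k) (Set.Iic n) := fun x hx =>
      ih x (Nat.lt_succ_of_le hx) (le_trans hx (Nat.le_of_succ_le_succ hn))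
    have hn' : Set.EqOn (Fa k n) (F k) (Set.Iic n) := fun x hx => ih x (Nat.lt_succ_of_le hx) hx
    rw [F, Fa, Fa, hfuel.iterate (Fa_mapsTo_Iic _ _) k Set.self_mem_Iic,
      hn'.iterate (Fa_mapsTo_Iic _ _) k Set.self_mem_Iic]

theorem F_le (n : ℕ) : F k n ≤ n := Fa_le n n

theorem F_zero : F k 0 = 0 := rfl

theorem F_succ (n : ℕ) : F k (n + 1) = n + 1 - (F k)^[k] n := by
  have hn : Set.EqOn (Fa k n) (F k) (Set.Iic n) := fun _ hx => Fa_eq_F hx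
  rw [F, Fa, hn.iterate (Fa_mapsTo_Iic _ _) k Set.self_mem_Iic]

theorem F_one : F k 1 = 1 := by
  rw [F_succ, Function.iterate_fixed F_zero]

theorem F_iterate_le (i n : ℕ) : (F k)^[i] n ≤ n := by
  induction i with
  | zero => exact le_rfl
  | succ i ih => exact Function.iterate_succ_apply' (F k) i n ▸ (F_le _).trans ih

theorem F_iterate_step_of_lt {N : ℕ}
    (hstep : ∀ x < N, F k x ≤ F k (x + 1) ∧ F k (x + 1) ≤ F k x + 1) (i : ℕ) {x : ℕ}
    (hx : x < N) : (F k)^[i] x ≤ (F k)^[i] (x + 1) ∧ (F k)^[i] (x + 1) ≤ (F k)^[i] x + 1 := by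
  induction i with
  | zero => exact ⟨Nat.le_succ x, le_rfl⟩
  | succ i ih =>
    simp only [Function.iterate_succ_apply']
    obtain ⟨hlo, hhi⟩ := ih
    rcases (show (F k)^[i] (x + 1) = (F k)^[i] x ∨ (F k)^[i] (x + 1) = (F k)^[i] x + 1 by omega)
      with h | h <;> rw [h]
    · omega
    · exact hstep _ ((F_iterate_le i x).trans_lt hx)

theorem F_step (n : ℕ) : F k n ≤ F k (n + 1) ∧ F k (n + 1) ≤ F k n + 1 := by
  induction n using Nat.strong_induction_on with
  | _ n ih =>
    obtain _ | n := n
    · rw [F_zero, F_one]; omega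
    have hiter := F_iterate_step_of_lt ih k (Nat.lt_add_one n)
    have hbound := F_iterate_le (k := k) k (n + 1)
    rw [F_succ (n + 1), F_succ n]
    omega

theorem F_monotone : Monotone (F k) :=
  monotone_nat_of_le_succ fun n => (F_step n).1

/-- `m ≤ A k (p - (k - 1))` says `A k p + m ≤ A k (p + 1)`; at `p = 0` only `m = 0` is allowed,
since `F k 2 = 1`. -/
def SelfSimilarBelow (k N : ℕ) : Prop :=
  ∀ p m, A k p + m < N → m ≤ A k (p - (k - 1)) → (p = 0 → m = 0) →
    F k (A k p + m) = A k (p - 1) + F k m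

theorem F_iterate_A_of_selfSimilarBelow (hk : 1 ≤ k) {N q : ℕ} (h : SelfSimilarBelow k N)
    (hq : A k q < N) (i : ℕ) : (F k)^[i] (A k q) = A k (q - i) := by
  induction i with
  | zero => rfl
  | succ i ih =>
    have hlt : A k (q - i) + 0 < N := (A_strictMono hk).monotone (Nat.sub_le q i) |>.trans_lt hq
    have := h (q - i) 0 hlt (Nat.zero_le _) fun _ => rfl
    rw [Function.iterate_succ_apply', ih, ← Nat.add_zero (A k (q - i)), this, F_zero,
      Nat.add_zero, Nat.sub_sub]

theorem F_iterate_A_add_of_selfSimilarBelow (hk : 1 ≤ k) {N p x : ℕ}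
    (h : SelfSimilarBelow k N) (hx : x < A k (p - (k - 1))) (hN : A k p + x < N) {i : ℕ}
    (hi : i ≤ k) : (F k)^[i] (A k p + x) = A k (p - i) + (F k)^[i] x := by
  induction i with
  | zero => rfl
  | succ i ih =>
    have hsmall : A k (p - (k - 1)) < N :=
      ((A_strictMono hk).monotone (Nat.sub_le p _)).trans_lt (Nat.lt_of_add_right_lt hN)
    have hbound : (F k)^[i] x ≤ A k (p - i - (k - 1)) := by
      calc (F k)^[i] x ≤ (F k)^[i] (A k (p - (k - 1))) := F_monotone.iterate i hx.le
        _ = A k (p - i - (k - 1)) := by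
          rw [F_iterate_A_of_selfSimilarBelow hk h hsmall, Nat.sub_right_comm]
    have hbottom : p - i = 0 → (F k)^[i] x = 0 := fun hp => by
      rw [Nat.sub_eq_zero_of_le (by omega : p ≤ k - 1), A_zero, Nat.lt_one_iff] at hx
      rw [hx, Function.iterate_fixed F_zero]
    have hlt : A k (p - i) + (F k)^[i] x < N := ih (by omega) ▸ (F_iterate_le i _).trans_lt hN
    rw [Function.iterate_succ_apply', ih (by omega), h _ _ hlt hbound hbottom,
      Function.iterate_succ_apply', Nat.sub_sub]

theorem F_A_succ_of_selfSimilarBelow (hk : 1 ≤ k) {p : ℕ}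
    (h : SelfSimilarBelow k (A k (p + 1))) : F k (A k (p + 1)) = A k p := by
  set B := A k (p - (k - 1))
  have hB : 0 < B := A_pos _
  have hsucc : A k (p + 1) = A k p + B := A_succ hk p
  -- `A (p + 1) - 1 = A p + (B - 1)`, and `F B` unfolds to `B - F^[k] (B - 1)`.
  have hiter := F_iterate_A_add_of_selfSimilarBelow hk h (p := p) (x := B - 1) (by omega)
    (by omega) le_rfl
  have hFB : F k B = A k (p - k) := by
    have := F_iterate_A_of_selfSimilarBelow hk h (q := p - (k - 1))
      (by have := A_pos (k := k) p; omega) 1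
    rwa [Function.iterate_one, Nat.sub_sub, Nat.sub_add_cancel hk] at this
  have hFB' : F k B = B - (F k)^[k] (B - 1) := by
    simpa only [Nat.sub_add_cancel hB] using F_succ (k := k) (B - 1)
  have hle := F_iterate_le (k := k) k (B - 1)
  rw [hsucc, show A k p + B = A k p + (B - 1) + 1 by omega, F_succ, hiter]
  omega

theorem F_A_add_succ_of_selfSimilarBelow (hk : 1 ≤ k) {p m : ℕ} (hp : 1 ≤ p)
    (hm : m < A k (p - (k - 1))) (h : SelfSimilarBelow k (A k p + (m + 1))) :
    F k (A k p + (m + 1)) = A k (p - 1) + F k (m + 1) := by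
  have hiter := F_iterate_A_add_of_selfSimilarBelow hk h hm (by omega) le_rfl
  have hrec := A_pred_add_A_sub hk hp
  have hle := F_iterate_le (k := k) k m
  rw [← Nat.add_assoc, F_succ, hiter, F_succ]
  omega

theorem selfSimilarBelow_succ (hk : 1 ≤ k) {N : ℕ} (h : SelfSimilarBelow k N) :
    SelfSimilarBelow k (N + 1) := by
  intro p m hN hm hp
  rcases Nat.lt_or_eq_of_le (Nat.le_of_lt_succ hN) with hN | rfl
  · exact h p m hN hm hp
  obtain _ | m := m
  · rw [F_zero, Nat.add_zero, Nat.add_zero]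
    obtain _ | p := p
    · rw [A_zero, F_one]
    · rw [Nat.add_sub_cancel]
      exact F_A_succ_of_selfSimilarBelow hk h
  · exact F_A_add_succ_of_selfSimilarBelow hk (Nat.pos_of_ne_zero (mt hp m.succ_ne_zero)) hm h

theorem selfSimilarBelow (hk : 1 ≤ k) (N : ℕ) : SelfSimilarBelow k N := by
  induction N with
  | zero => exact fun _ _ h => absurd h (Nat.not_lt_zero _)
  | succ N ih => exact selfSimilarBelow_succ hk ih

theorem F_iterate_A (hk : 1 ≤ k) (p j : ℕ) : (F k)^[j] (A k p) = A k (p - j) :=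
  F_iterate_A_of_selfSimilarBelow hk (selfSimilarBelow hk _) (Nat.lt_add_one _) j

theorem L_A (hk : 1 ≤ k) (p : ℕ) : L k (A k p) = A k (p + 1) := by
  rw [L, F_iterate_A hk, A_succ hk]

theorem L_iterate_A (hk : 1 ≤ k) (p j : ℕ) : (L k)^[j] (A k p) = A k (p + j) := by
  have hsemi : Function.Semiconj (A k) Nat.succ (L k) := fun p => (L_A hk p).symm
  rw [← hsemi.iterate_right j p, Nat.succ_iterate]

end Hofstadter

/-- `F_k^j (A_{k,p}) = A_{k, p ⊖ j}`, `L_k^j (A_{k,p}) = A_{k, p+j}`, and in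
particular `A_{k,p} = L_k^p 1`. -/
theorem F_L_iterate_on_A (k : ℕ) (hk : 1 ≤ k) (p j : ℕ) :
    (F k)^[j] (A k p) = A k (p - j) ∧
    (L k)^[j] (A k p) = A k (p + j) ∧
    A k p = (L k)^[p] 1 := by
  refine ⟨Hofstadter.F_iterate_A hk p j, Hofstadter.L_iterate_A hk p j, ?_⟩
  rw [← Hofstadter.A_zero, Hofstadter.L_iterate_A hk, Nat.zero_add]
end

section
/- (Generalized Zeckendorf theorem) For every integer k ≥ 1 and every n ≥ 0, there exists a unique finite set D ⊆ ℕ such that |p − q| ≥ k for all distinct p, q ∈ D and Σ_{p∈D} A_{k,p} = n. -/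
/-- `D` is a canonical `k`-decomposition of `n` : distinct elements are at
distance at least `k`, and the corresponding `A`-numbers sum to `n`. -/
def IsCanonDecomp (k n : ℕ) (D : Finset ℕ) : Prop :=
  (∀ p ∈ D, ∀ q ∈ D, p ≠ q → k ≤ Nat.dist p q) ∧ ∑ p ∈ D, A k p = n

/-!
Write `g = max k 1`, so that `A k (p + 1) = A k p + A k (p + 1 - g)` and, for `q < p`, the
separation `k ≤ dist p q` means `q < p + 1 - g`. A separated set below `m` has `A`-sum
`< A k m`: removing its top element `p` leaves a separated set below `p + 1 - g`, whose sum is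
`< A k (p + 1 - g)` by induction. Hence the top element of a decomposition of `n` is the
largest `p` with `A k p ≤ n`, which gives uniqueness, and this greedy choice gives existence.
-/

open Finset

theorem A_zero (k : ℕ) : A k 0 = 1 := by
  rw [A]

theorem A_add_one (k p : ℕ) : A k (p + 1) = A k p + A k (p + 1 - max k 1) := by
  rw [A]
  split_ifs with h
  · have hp : A k p = p + 1 := by
      cases p with
      | zero => exact A_zero k
      | succ q => rw [A, if_pos (by omega)]
    rw [hp, show p + 1 - max k 1 = 0 by omega, A_zero]
  · rfl

theorem A_pos (k p : ℕ) : 0 < A k p := by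
  induction p with
  | zero => simp [A_zero]
  | succ p ih => rw [A_add_one]; omega

theorem A_strictMono (k : ℕ) : StrictMono (A k) :=
  strictMono_nat_of_lt_succ fun p => by
    rw [A_add_one]
    exact Nat.lt_add_of_pos_right (A_pos k _)

theorem lt_A_self (k p : ℕ) : p < A k p := by
  induction p with
  | zero => simp [A_zero]
  | succ p ih => rw [A_add_one]; have := A_pos k (p + 1 - max k 1); omega

theorem le_dist_iff_lt_sub {k p q : ℕ} (hqp : q < p) :
    k ≤ Nat.dist p q ↔ q < p + 1 - max k 1 := by
  unfold Nat.dist; omega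

theorem sum_A_lt_of_subset_range {k m : ℕ} {D : Finset ℕ}
    (hD : (D : Set ℕ).Pairwise (k ≤ Nat.dist · ·)) (hDm : D ⊆ range m) :
    ∑ p ∈ D, A k p < A k m := by
  induction m using Nat.strong_induction_on generalizing D with
  | _ m ih =>
    rcases m with _ | m
    · simp [subset_empty.1 (range_zero ▸ hDm), A_zero]
    rw [range_add_one] at hDm
    by_cases hmD : m ∈ D
    · have hrest : D.erase m ⊆ range (m + 1 - max k 1) := fun q hq => by
        obtain ⟨hqm, hqD⟩ := mem_erase.1 hq
        have hlt := mem_range.1 (subset_insert_iff.1 hDm hq)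
        exact mem_range.2 ((le_dist_iff_lt_sub hlt).1 (hD hmD hqD (Ne.symm hqm)))
      have := ih _ (by omega) (hD.mono (coe_subset.2 (D.erase_subset m))) hrest
      rw [← add_sum_erase D _ hmD, A_add_one]
      omega
    · exact (ih m (by omega) hD ((subset_insert_iff_of_notMem hmD).1 hDm)).trans
        (A_strictMono k m.lt_succ_self)

theorem sum_A_lt_sum_A_of_mem {k m : ℕ} {D E : Finset ℕ}
    (hE : (E : Set ℕ).Pairwise (k ≤ Nat.dist · ·)) (hEm : E ⊆ range m) (hmD : m ∈ D) :
    ∑ p ∈ E, A k p < ∑ p ∈ D, A k p :=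
  (sum_A_lt_of_subset_range hE hEm).trans_le (single_le_sum (fun _ _ => Nat.zero_le _) hmD)

theorem exists_pairwise_sum_A_eq {k m n : ℕ} (hn : n < A k m) :
    ∃ D : Finset ℕ, (D : Set ℕ).Pairwise (k ≤ Nat.dist · ·) ∧ D ⊆ range m ∧
      ∑ p ∈ D, A k p = n := by
  induction m using Nat.strong_induction_on generalizing n with
  | _ m ih =>
    rcases m with _ | m
    · rw [A_zero, Nat.lt_one_iff] at hn
      exact ⟨∅, by simp, empty_subset _, by rw [hn, sum_empty]⟩
    rcases lt_or_ge n (A k m) with hnm | hnm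
    · obtain ⟨D, hD, hDm, hsum⟩ := ih m (by omega) hnm
      exact ⟨D, hD, hDm.trans (range_subset_range.2 m.le_succ), hsum⟩
    rw [A_add_one] at hn
    obtain ⟨D, hD, hDm, hsum⟩ := ih (m + 1 - max k 1) (by omega) (n := n - A k m) (by omega)
    have hlt : ∀ q ∈ D, q < m + 1 - max k 1 := fun q hq => mem_range.1 (hDm hq)
    have hmD : m ∉ D := fun h => by have := hlt m h; omega
    refine ⟨insert m D, ?_, ?_, ?_⟩
    · rw [coe_insert, Set.pairwise_insert]
      refine ⟨hD, fun q hq _ => ?_⟩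
      have h := (le_dist_iff_lt_sub (show q < m by have := hlt q hq; omega)).2 (hlt q hq)
      exact ⟨h, Nat.dist_comm q m ▸ h⟩
    · rw [range_add_one]
      exact insert_subset_insert m (hDm.trans (range_subset_range.2 (by omega)))
    · rw [sum_insert hmD, hsum]; omega

theorem eq_of_sum_A_eq {k m : ℕ} {D E : Finset ℕ}
    (hD : (D : Set ℕ).Pairwise (k ≤ Nat.dist · ·))
    (hE : (E : Set ℕ).Pairwise (k ≤ Nat.dist · ·)) (hDm : D ⊆ range m) (hEm : E ⊆ range m)
    (hsum : ∑ p ∈ D, A k p = ∑ p ∈ E, A k p) :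
    D = E := by
  induction m generalizing D E with
  | zero => rw [subset_empty.1 hDm, subset_empty.1 hEm]
  | succ m ih =>
    rw [range_add_one] at hDm hEm
    by_cases hmD : m ∈ D <;> by_cases hmE : m ∈ E
    · refine erase_injOn' m hmD hmE (ih (hD.mono (coe_subset.2 (D.erase_subset m)))
        (hE.mono (coe_subset.2 (E.erase_subset m))) (subset_insert_iff.1 hDm)
        (subset_insert_iff.1 hEm) ?_)
      show ∑ p ∈ D.erase m, A k p = ∑ p ∈ E.erase m, A k p
      have := add_sum_erase D (A k) hmD
      have := add_sum_erase E (A k) hmE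
      omega
    · exact absurd hsum
        (sum_A_lt_sum_A_of_mem hE ((subset_insert_iff_of_notMem hmE).1 hEm) hmD).ne'
    · exact absurd hsum
        (sum_A_lt_sum_A_of_mem hD ((subset_insert_iff_of_notMem hmD).1 hDm) hmE).ne
    · exact ih hD hE ((subset_insert_iff_of_notMem hmD).1 hDm)
        ((subset_insert_iff_of_notMem hmE).1 hEm) hsum

theorem subset_range_sum_A {k : ℕ} (D : Finset ℕ) : D ⊆ range (∑ p ∈ D, A k p) :=
  fun p hp =>
    mem_range.2 ((lt_A_self k p).trans_le (single_le_sum (fun _ _ => Nat.zero_le _) hp))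

theorem zeckendorf_generalized_general (k : ℕ) (n : ℕ) :
    ∃! D : Finset ℕ, IsCanonDecomp k n D := by
  obtain ⟨D, hD, hDn, hsum⟩ := exists_pairwise_sum_A_eq (lt_A_self k n)
  refine ⟨D, ⟨hD, hsum⟩, fun E ⟨hE, hEsum⟩ => ?_⟩
  exact eq_of_sum_A_eq hE hD (hEsum ▸ subset_range_sum_A E) hDn (hEsum.trans hsum.symm)

/-- Generalized Zeckendorf theorem: every `n` has a unique canonical
`k`-decomposition. -/
theorem zeckendorf_generalized (k : ℕ) (hk : 1 ≤ k) (n : ℕ) :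
    ∃! D : Finset ℕ, IsCanonDecomp k n D :=
  zeckendorf_generalized_general k n
end

section
/- For every integer k ≥ 1 and every n ≥ 0, β_k^n ≤ A_{k,n}. -/
theorem A_of_lt {k p : ℕ} (hp : p < k) : A k p = p + 1 := by
  cases p with
  | zero => simp [A]
  | succ p => rw [A]; simp [hp]

theorem A_add_succ (j n : ℕ) : A (j + 1) (n + j + 1) = A (j + 1) (n + j) + A (j + 1) n := by
  rw [A, if_neg (by omega), max_eq_left (by omega)]
  congr 2
  omega

theorem le_A_of_le_of_rec (j : ℕ) (f : ℕ → ℝ) (hinit : ∀ n ≤ j, f n ≤ n + 1)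
    (hrec : ∀ n, f (n + j + 1) ≤ f (n + j) + f n) (n : ℕ) : f n ≤ A (j + 1) n := by
  induction n using Nat.strong_induction_on with
  | _ n ih =>
    rcases le_or_gt n j with hn | hn
    · rw [A_of_lt (by omega)]
      exact_mod_cast hinit n hn
    · obtain ⟨m, rfl⟩ : ∃ m, n = m + j + 1 := ⟨n - j - 1, by omega⟩
      rw [A_add_succ, Nat.cast_add]
      exact (hrec m).trans (add_le_add (ih _ (by omega)) (ih _ (by omega)))

section Root

variable {β : ℝ} {j : ℕ}

theorem one_le_of_pow_succ_eq (hβ : 0 ≤ β) (h : β ^ (j + 1) = β ^ j + 1) : 1 ≤ β := by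
  by_contra! hlt
  have : β ^ (j + 1) ≤ β ^ j := pow_le_pow_of_le_one hβ hlt.le j.le_succ
  linarith

theorem pow_succ_le_pow_add_one (hβ : 0 ≤ β) (h : β ^ (j + 1) = β ^ j + 1) {m : ℕ}
    (hm : m ≤ j) : β ^ (m + 1) ≤ β ^ m + 1 := by
  have h1 := one_le_of_pow_succ_eq hβ h
  have hmono : β ^ m ≤ β ^ j := pow_le_pow_right₀ h1 hm
  calc β ^ (m + 1) = β ^ m + β ^ m * (β - 1) := by ring
    _ ≤ β ^ m + β ^ j * (β - 1) := by gcongr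
    _ = β ^ m + 1 := by rw [mul_sub_one, ← pow_succ, h]; ring

theorem pow_le_add_one_of_le (hβ : 0 ≤ β) (h : β ^ (j + 1) = β ^ j + 1) {m : ℕ}
    (hm : m ≤ j + 1) : β ^ m ≤ m + 1 := by
  induction m with
  | zero => simp
  | succ m ih =>
    have := pow_succ_le_pow_add_one hβ h (m := m) (by omega)
    push_cast
    linarith [ih (by omega)]

theorem pow_add_succ_eq (h : β ^ (j + 1) = β ^ j + 1) (n : ℕ) :
    β ^ (n + j + 1) = β ^ (n + j) + β ^ n := by
  rw [add_assoc, pow_add, h, pow_add]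
  ring

end Root

/-- `β_k^n ≤ A_{k,n}` where `β_k` is the unique positive real root of
`X^k - X^{k-1} - 1`. -/
theorem beta_pow_le_A (k : ℕ) (hk : 1 ≤ k) (β : ℝ) (hβ : 0 < β)
    (hβroot : β ^ k - β ^ (k - 1) - 1 = 0) (n : ℕ) :
    β ^ n ≤ A k n := by
  obtain ⟨j, rfl⟩ : ∃ j, k = j + 1 := ⟨k - 1, by omega⟩
  have hroot : β ^ (j + 1) = β ^ j + 1 := by
    rw [Nat.add_sub_cancel] at hβroot
    linarith
  exact le_A_of_le_of_rec j (β ^ ·) (fun m hm => pow_le_add_one_of_le hβ.le hroot (by omega))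
    (fun m => (pow_add_succ_eq hroot m).le) n
end
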